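/- Let a, b, c ∈ ℝ. If the quadratic form ξ ↦ Q(ξ) − (a ξ₁₂ + b ξ₂₃ + c ξ₃₁)² is rank-one convex, i.e. Q(x ⊗ y) ≥ (a x₁y₂ + b x₂y₃ + c x₃y₁)² for all x, y ∈ ℝ³, where Q(ξ) = ξ₁₁² + ξ₂₂² + ξ₃₃² − 2ξ₁₁ξ₂₂ − 2ξ₂₂ξ₃₃ − 2ξ₃₃ξ₁₁ + ξ₁₂² + ξ₂₃² + ξ₃₁², then a = b = c = 0. -/

import Mathlib

/-!
On the diagonal rank-one matrices `x ⊗ x` the form is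
`Q(x ⊗ x) = ((x₁² - x₂²)² + (x₂² - x₃²)² + (x₃² - x₁²)²) / 2`, which vanishes when
`x = (1, s, t)` with `s, t = ±1`. There the hypothesis forces `a s + b s t + c t = 0`, and three
sign choices give an invertible linear system in `a, b, c`.
-/

/-- The tensor (outer) product of two vectors in ℝ³, as a 3×3 matrix. -/
def outer (x y : Fin 3 → ℝ) : Matrix (Fin 3) (Fin 3) ℝ :=
  fun i j => x i * y j

/-- The quadratic form
`Q(ξ) = ξ₁₁² + ξ₂₂² + ξ₃₃² − 2ξ₁₁ξ₂₂ − 2ξ₂₂ξ₃₃ − 2ξ₃₃ξ₁₁ + ξ₁₂² + ξ₂₃² + ξ₃₁²`. -/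
def Q (ξ : Matrix (Fin 3) (Fin 3) ℝ) : ℝ :=
  ξ 0 0 ^ 2 + ξ 1 1 ^ 2 + ξ 2 2 ^ 2
    - 2 * ξ 0 0 * ξ 1 1 - 2 * ξ 1 1 * ξ 2 2 - 2 * ξ 2 2 * ξ 0 0
    + ξ 0 1 ^ 2 + ξ 1 2 ^ 2 + ξ 2 0 ^ 2

theorem Q_outer_self (x : Fin 3 → ℝ) :
    Q (outer x x) =
      ((x 0 ^ 2 - x 1 ^ 2) ^ 2 + (x 1 ^ 2 - x 2 ^ 2) ^ 2 + (x 2 ^ 2 - x 0 ^ 2) ^ 2) / 2 := by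
  simp only [Q, outer]
  ring

theorem Q_outer_self_eq_zero_of_sq_eq_one {s t : ℝ} (hs : s ^ 2 = 1) (ht : t ^ 2 = 1) :
    Q (outer ![1, s, t] ![1, s, t]) = 0 := by
  simp [Q_outer_self, hs, ht]

/-- if `ξ ↦ Q(ξ) − (a ξ₁₂ + b ξ₂₃ + c ξ₃₁)²` is rank-one convex, i.e.
`Q(x ⊗ y) ≥ (a x₁y₂ + b x₂y₃ + c x₃y₁)²` for all `x, y ∈ ℝ³`, then `a = b = c = 0`. -/
theorem no_square_subtraction (a b c : ℝ)
    (h : ∀ x y : Fin 3 → ℝ,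
      (a * (x 0 * y 1) + b * (x 1 * y 2) + c * (x 2 * y 0)) ^ 2 ≤ Q (outer x y)) :
    a = 0 ∧ b = 0 ∧ c = 0 := by
  have key : ∀ s t : ℝ, s ^ 2 = 1 → t ^ 2 = 1 → a * s + b * (s * t) + c * t = 0 := by
    intro s t hs ht
    have hle := h ![1, s, t] ![1, s, t]
    rw [Q_outer_self_eq_zero_of_sq_eq_one hs ht] at hle
    have hsq := le_antisymm hle (sq_nonneg _)
    simpa [mul_comm t] using hsq
  have e₁ := key 1 1 (by norm_num) (by norm_num)
  have e₂ := key (-1) 1 (by norm_num) (by norm_num)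
  have e₃ := key 1 (-1) (by norm_num) (by norm_num)
  exact ⟨by linarith, by linarith, by linarith⟩
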